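/- Let ν be a probability measure on Ω and Λ a nonempty finite subset of Z^d. Define F(ω) = |Λ|·d_K(E_Λ(ω), ν) = sup{Σ_{x∈Λ} G(T_xω) − |Λ|·E_ν[G] : G: Ω → ℝ 1-Lipschitz with respect to the metric d}. Then ‖δ(F)‖₂² ≤ c_d·|Λ|, where c_d = (Σ_{z∈Z^d} 2^{−‖z‖∞})². -/

import Mathlib

/-!
Changing `ω` at a single site `y` moves each shift `T_x ω` by at most `2 ^ (-‖y + x‖)` in the
metric, so every Lipschitz sum `∑ x ∈ Λ, G (T_x ω)`, and hence their supremum `F`, moves by at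
most `b y = ∑ x ∈ Λ, 2 ^ (-‖y + x‖)`. With `c = ∑ z, 2 ^ (-‖z‖)` one has `b y ≤ c` and
`∑ y, b y = #Λ * c`, so `∑ y, δ_y(F) ^ 2 ≤ c * ∑ y, b y = c ^ 2 * #Λ`.
-/

open MeasureTheory Filter

namespace Paper

/-- Sites of the lattice `ℤ^d`. -/
abbrev Site (d : ℕ) := Fin d → ℤ

/-- Configuration space `Ω = S^{ℤ^d}`. -/
abbrev Config (S : Type) (d : ℕ) := Site d → S

variable {S : Type} {d : ℕ}

/-- Shift action: `(T_x ω)_y = ω_{y-x}`. -/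
def shift (x : Site d) (ω : Config S d) : Config S d := fun y => ω (y - x)

/-- Oscillation `δ_x(F)` of `F` at site `x`. -/
noncomputable def osc (F : Config S d → ℝ) (x : Site d) : ℝ :=
  sSup {r | ∃ ω ω' : Config S d, (∀ y, y ≠ x → ω y = ω' y) ∧ r = |F ω - F ω'|}

/-- `‖δ(F)‖₁`. -/
noncomputable def oscNorm1 (F : Config S d → ℝ) : ℝ := ∑' x : Site d, osc F x

/-- `‖δ(F)‖₂²`. -/
noncomputable def oscNorm2sq (F : Config S d → ℝ) : ℝ := ∑' x : Site d, osc F x ^ 2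

/-- `‖δ(F)‖₂`. -/
noncomputable def oscNorm2 (F : Config S d → ℝ) : ℝ := Real.sqrt (oscNorm2sq F)

/-- `F ∈ Δ₁(Ω)`: continuous with summable oscillations. -/
def MemDelta1 [TopologicalSpace S] (F : Config S d → ℝ) : Prop :=
  Continuous F ∧ Summable (fun x : Site d => osc F x)

/-- `F ∈ Δ₂(Ω)`: continuous with square-summable oscillations. -/
def MemDelta2 [TopologicalSpace S] (F : Config S d → ℝ) : Prop :=
  Continuous F ∧ Summable (fun x : Site d => osc F x ^ 2)

/-- Gaussian concentration bound `GCB(D)`. -/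
def GCB [TopologicalSpace S] [MeasurableSpace S] (ν : Measure (Config S d)) (D : ℝ) : Prop :=
  ∀ F : Config S d → ℝ, MemDelta2 F →
    ∫ ω, Real.exp (F ω - ∫ ω', F ω' ∂ν) ∂ν ≤ Real.exp (D * oscNorm2sq F)

/-- Moment concentration bound `MCB(2p, C)` of order `2p` with constant `C`. -/
def MCB [TopologicalSpace S] [MeasurableSpace S] (ν : Measure (Config S d)) (p : ℕ) (C : ℝ) :
    Prop :=
  ∀ F : Config S d → ℝ, MemDelta2 F →
    ∫ ω, (F ω - ∫ ω', F ω' ∂ν) ^ (2 * p) ∂ν ≤ C * (oscNorm2sq F) ^ p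

/-- A local function: depends only on finitely many coordinates. -/
def IsLocal (F : Config S d → ℝ) : Prop :=
  ∃ Λ : Finset (Site d), ∀ ω ω' : Config S d, (∀ x ∈ Λ, ω x = ω' x) → F ω = F ω'

/-- The cube `C_n = {x : ‖x‖_∞ ≤ n}`. -/
noncomputable def cube (d n : ℕ) : Finset (Site d) :=
  Fintype.piFinset (fun _ : Fin d => Finset.Icc (-(n : ℤ)) (n : ℤ))

/-- Sup norm `‖f‖_∞`. -/
noncomputable def supNorm (f : Config S d → ℝ) : ℝ := sSup {r | ∃ ω, r = |f ω|}

/-- The metric `d(ω,ω') = 2^{-min{‖x‖_∞ : ω_x ≠ ω'_x}}` on configuration space. -/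
noncomputable def confDist (ω ω' : Config S d) : ℝ :=
  haveI := Classical.propDecidable (ω = ω')
  if ω = ω' then 0
  else (2 : ℝ) ^ (-sInf {r : ℝ | ∃ x : Site d, ω x ≠ ω' x ∧ r = ‖x‖})

/-- `G` is 1-Lipschitz with respect to `confDist`. -/
def Lip1 (G : Config S d → ℝ) : Prop :=
  ∀ ω ω' : Config S d, |G ω - G ω'| ≤ confDist ω ω'

/-- Kantorovich distance `d_K(E_Λ(ω), ν)` between the empirical measure and `ν`. -/
noncomputable def dKEmp [MeasurableSpace S] (ν : Measure (Config S d)) (Λ : Finset (Site d))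
    (ω : Config S d) : ℝ :=
  sSup {r | ∃ G : Config S d → ℝ, Lip1 G ∧
    r = (∑ x ∈ Λ, G (shift x ω)) / (Λ.card : ℝ) - ∫ ω', G ω' ∂ν}

end Paper

lemma summable_pow_natAbs {r : ℝ} (h0 : 0 ≤ r) (h1 : r < 1) :
    Summable fun k : ℤ => r ^ k.natAbs :=
  Summable.of_nat_of_neg (by simpa using summable_geometric_of_lt_one h0 h1)
    (by simpa using summable_geometric_of_lt_one h0 h1)

lemma summable_fin_pi_prod {α : Type*} {g : α → ℝ} (hg : Summable g) (hg0 : 0 ≤ g) :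
    ∀ n : ℕ, Summable fun z : Fin n → α => ∏ i, g (z i)
  | 0 => Summable.of_finite
  | n + 1 => by
    have hprod := hg.mul_of_nonneg (summable_fin_pi_prod hg hg0 n) hg0
      fun z => Finset.prod_nonneg fun i _ => hg0 (z i)
    refine (Fin.consEquiv fun _ => α).summable_iff.mp ?_
    simpa [Function.comp_def, Fin.prod_univ_succ] using hprod

/-- The `ℓ¹` norm is at most `d` times the sup norm, so `b ^ (-‖z‖)` is dominated by the
product of the one-dimensional geometric weights `r ^ |zᵢ|` with `r = b ^ (-1 / (d + 1))`. -/
lemma summable_rpow_neg_norm (d : ℕ) {b : ℝ} (hb : 1 < b) :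
    Summable fun z : Fin d → ℤ => b ^ (-‖z‖) := by
  set r : ℝ := b ^ (-((d : ℝ) + 1)⁻¹)
  have hr0 : 0 ≤ r := Real.rpow_nonneg (by linarith) _
  have hr1 : r < 1 := Real.rpow_lt_one_of_one_lt_of_neg hb
    (by simp only [Left.neg_neg_iff, inv_pos]; positivity)
  refine Summable.of_nonneg_of_le (fun z => Real.rpow_nonneg (by linarith) _) (fun z => ?_)
    (summable_fin_pi_prod (summable_pow_natAbs hr0 hr1) (fun k => pow_nonneg hr0 _) d)
  have hsum : ∑ i, ((z i).natAbs : ℝ) ≤ ((d : ℝ) + 1) * ‖z‖ := calc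
    ∑ i, ((z i).natAbs : ℝ) ≤ ∑ _i : Fin d, ‖z‖ :=
      Finset.sum_le_sum fun i _ => by simpa [Int.norm_eq_abs] using norm_le_pi_norm z i
    _ ≤ ((d : ℝ) + 1) * ‖z‖ := by
      simp only [Finset.sum_const, Finset.card_univ, Fintype.card_fin, nsmul_eq_mul]
      nlinarith [norm_nonneg z]
  rw [Finset.prod_pow_eq_pow_sum, ← Real.rpow_natCast, ← Real.rpow_mul (by linarith)]
  refine Real.rpow_le_rpow_of_exponent_le hb.le ?_
  push_cast
  rw [neg_mul, neg_le_neg_iff, inv_mul_le_iff₀ (by positivity)]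
  exact hsum

lemma ciSup_le_ciSup_add {ι : Sort*} [Nonempty ι] {f g : ι → ℝ} {b : ℝ}
    (hfg : ∀ i, f i ≤ g i + b) (hg : BddAbove (Set.range g)) :
    ⨆ i, f i ≤ (⨆ i, g i) + b :=
  ciSup_le fun i => (hfg i).trans (add_le_add_left (le_ciSup hg i) b)

lemma bddAbove_range_of_le_add {ι : Sort*} {f g : ι → ℝ} {b : ℝ}
    (hfg : ∀ i, f i ≤ g i + b) (hg : BddAbove (Set.range g)) : BddAbove (Set.range f) := by
  obtain ⟨M, hM⟩ := hg
  exact ⟨M + b, Set.forall_mem_range.mpr fun i =>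
    (hfg i).trans (add_le_add_left (hM (Set.mem_range_self i)) b)⟩

/-- This covers the junk value `0` of an unbounded or empty supremum, hence `0 ≤ b`. -/
lemma abs_ciSup_sub_ciSup_le {ι : Sort*} {f g : ι → ℝ} {b : ℝ} (hb : 0 ≤ b)
    (hfg : ∀ i, |f i - g i| ≤ b) : |(⨆ i, f i) - ⨆ i, g i| ≤ b := by
  have hf : ∀ i, f i ≤ g i + b := fun i => by linarith [(abs_le.mp (hfg i)).2]
  have hg : ∀ i, g i ≤ f i + b := fun i => by linarith [(abs_le.mp (hfg i)).1]
  rcases isEmpty_or_nonempty ι with hι | hι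
  · simpa [Real.iSup_of_isEmpty] using hb
  by_cases hbdd : BddAbove (Set.range g)
  · have hbdd' := bddAbove_range_of_le_add hf hbdd
    rw [abs_sub_le_iff]
    constructor
    · linarith [ciSup_le_ciSup_add hf hbdd]
    · linarith [ciSup_le_ciSup_add hg hbdd']
  · have hbdd' : ¬ BddAbove (Set.range f) := fun h => hbdd (bddAbove_range_of_le_add hg h)
    simpa [Real.iSup_of_not_bddAbove hbdd, Real.iSup_of_not_bddAbove hbdd'] using hb

lemma sSup_setOf_exists_eq_iSup {ι : Type*} (p : ι → Prop) (f : ι → ℝ) :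
    sSup {r | ∃ i, p i ∧ r = f i} = ⨆ i : {i // p i}, f i := by
  rw [iSup]
  congr 1
  ext r
  simp [eq_comm]

lemma tsum_sq_le_of_le_sum_translate {G : Type*} [AddGroup G] {a u : G → ℝ} (ha0 : 0 ≤ a)
    (ha : Summable a) (Λ : Finset G) (hu0 : 0 ≤ u) (hu : ∀ y, u y ≤ ∑ x ∈ Λ, a (y + x)) :
    ∑' y, u y ^ 2 ≤ (∑' z, a z) ^ 2 * Λ.card := by
  set c := ∑' z, a z
  have hright : ∀ x, Summable fun y => a (y + x) := fun x =>
    (Equiv.addRight x).summable_iff.mpr ha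
  have hb_le : ∀ y, ∑ x ∈ Λ, a (y + x) ≤ c := fun y => calc
    ∑ x ∈ Λ, a (y + x) ≤ ∑' x, a (y + x) :=
      ((Equiv.addLeft y).summable_iff.mpr ha).sum_le_tsum Λ fun x _ => ha0 _
    _ = c := (Equiv.addLeft y).tsum_eq a
  have hb_tsum : ∑' y, ∑ x ∈ Λ, a (y + x) = Λ.card * c := by
    rw [Summable.tsum_finsetSum fun x _ => hright x,
      Finset.sum_congr rfl fun x _ => show ∑' y, a (y + x) = c from (Equiv.addRight x).tsum_eq a,
      Finset.sum_const, nsmul_eq_mul]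
  have hsq : ∀ y, u y ^ 2 ≤ c * ∑ x ∈ Λ, a (y + x) := fun y => calc
    u y ^ 2 = u y * u y := sq _
    _ ≤ (∑ x ∈ Λ, a (y + x)) * c :=
      mul_le_mul (hu y) ((hu y).trans (hb_le y)) (hu0 y) (Finset.sum_nonneg fun x _ => ha0 _)
    _ = c * ∑ x ∈ Λ, a (y + x) := mul_comm _ _
  have hbsum : Summable fun y => c * ∑ x ∈ Λ, a (y + x) :=
    (summable_sum fun x _ => hright x).mul_left c
  calc ∑' y, u y ^ 2 ≤ ∑' y, c * ∑ x ∈ Λ, a (y + x) :=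
        (hbsum.of_nonneg_of_le (fun y => sq_nonneg _) hsq).tsum_le_tsum hsq hbsum
    _ = c ^ 2 * Λ.card := by rw [tsum_mul_left, hb_tsum]; ring

namespace Paper

variable {S : Type} {d : ℕ}

lemma confDist_le_of_forall_ne_eq {y : Site d} {ω ω' : Config S d}
    (h : ∀ z, z ≠ y → ω z = ω' z) : confDist ω ω' ≤ (2 : ℝ) ^ (-‖y‖) := by
  unfold confDist
  split_ifs with hωω'
  · exact Real.rpow_nonneg zero_le_two _
  have hne : {r : ℝ | ∃ z : Site d, ω z ≠ ω' z ∧ r = ‖z‖}.Nonempty := by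
    obtain ⟨z, hz⟩ := Function.ne_iff.mp hωω'
    exact ⟨_, z, hz, rfl⟩
  rw [(hne.subset_singleton_iff).mp ?_, csInf_singleton]
  rintro r ⟨z, hz, rfl⟩
  rw [Set.mem_singleton_iff, not_imp_comm.mp (h z) hz]

lemma shift_eq_shift_of_ne_add {y : Site d} {ω ω' : Config S d} (h : ∀ z, z ≠ y → ω z = ω' z)
    (x : Site d) : ∀ z, z ≠ y + x → shift x ω z = shift x ω' z :=
  fun z hz => h (z - x) fun hzx => hz (by rw [← hzx, sub_add_cancel])

lemma osc_nonneg (F : Config S d → ℝ) (x : Site d) : 0 ≤ osc F x :=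
  Real.sSup_nonneg <| by rintro _ ⟨ω, ω', -, rfl⟩; exact abs_nonneg _

lemma osc_le {F : Config S d → ℝ} {x : Site d} {b : ℝ} (hb : 0 ≤ b)
    (hF : ∀ ω ω' : Config S d, (∀ y, y ≠ x → ω y = ω' y) → |F ω - F ω'| ≤ b) :
    osc F x ≤ b :=
  Real.sSup_le (by rintro _ ⟨ω, ω', h, rfl⟩; exact hF ω ω' h) hb

noncomputable def scaledKantorovich [MeasurableSpace S] (ν : Measure (Config S d))
    (Λ : Finset (Site d)) (ω : Config S d) : ℝ :=
  sSup {r | ∃ G : Config S d → ℝ, Lip1 G ∧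
    r = (∑ x ∈ Λ, G (shift x ω)) - (Λ.card : ℝ) * ∫ ω', G ω' ∂ν}

lemma abs_scaledKantorovich_sub_le [MeasurableSpace S] (ν : Measure (Config S d))
    (Λ : Finset (Site d)) {y : Site d} {ω ω' : Config S d} (h : ∀ z, z ≠ y → ω z = ω' z) :
    |scaledKantorovich ν Λ ω - scaledKantorovich ν Λ ω'| ≤ ∑ x ∈ Λ, (2 : ℝ) ^ (-‖y + x‖) := by
  rw [scaledKantorovich, scaledKantorovich, sSup_setOf_exists_eq_iSup,
    sSup_setOf_exists_eq_iSup]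
  refine abs_ciSup_sub_ciSup_le (Finset.sum_nonneg fun x _ => Real.rpow_nonneg zero_le_two _)
    fun G => ?_
  calc _ = |∑ x ∈ Λ, (G.1 (shift x ω) - G.1 (shift x ω'))| := by
        rw [Finset.sum_sub_distrib]; ring_nf
    _ ≤ ∑ x ∈ Λ, |G.1 (shift x ω) - G.1 (shift x ω')| := Finset.abs_sum_le_sum_abs _ _
    _ ≤ _ := Finset.sum_le_sum fun x _ =>
        (G.2 _ _).trans (confDist_le_of_forall_ne_eq (shift_eq_shift_of_ne_add h x))

theorem oscNorm2sq_kantorovich_sup_le_general {S : Type} {d : ℕ} [MeasurableSpace S]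
    (ν : Measure (Config S d)) (Λ : Finset (Site d)) :
    oscNorm2sq (fun ω => sSup {r | ∃ G : Config S d → ℝ, Lip1 G ∧
        r = (∑ x ∈ Λ, G (shift x ω)) - (Λ.card : ℝ) * ∫ ω', G ω' ∂ν}) ≤
      (∑' z : Site d, (2 : ℝ) ^ (-‖z‖)) ^ 2 * (Λ.card : ℝ) := by
  have hosc : ∀ y, osc (scaledKantorovich ν Λ) y ≤ ∑ x ∈ Λ, (2 : ℝ) ^ (-‖y + x‖) := fun y =>
    osc_le (Finset.sum_nonneg fun x _ => Real.rpow_nonneg zero_le_two _)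
      fun ω ω' h => abs_scaledKantorovich_sub_le ν Λ h
  exact tsum_sq_le_of_le_sum_translate (fun z => Real.rpow_nonneg zero_le_two _)
    (summable_rpow_neg_norm d one_lt_two) Λ (osc_nonneg _) hosc

/-- oscillation bound for the (scaled) Kantorovich distance between the
empirical measure and `ν`. -/
theorem oscNorm2sq_kantorovich_sup_le {S : Type} {d : ℕ} [Fintype S] [TopologicalSpace S]
    [DiscreteTopology S] [MeasurableSpace S] [BorelSpace S]
    (ν : Measure (Config S d)) [IsProbabilityMeasure ν]
    (Λ : Finset (Site d)) (hΛ : Λ.Nonempty) :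
    oscNorm2sq (fun ω => sSup {r | ∃ G : Config S d → ℝ, Lip1 G ∧
        r = (∑ x ∈ Λ, G (shift x ω)) - (Λ.card : ℝ) * ∫ ω', G ω' ∂ν}) ≤
      (∑' z : Site d, (2 : ℝ) ^ (-‖z‖)) ^ 2 * (Λ.card : ℝ) :=
  oscNorm2sq_kantorovich_sup_le_general ν Λ

end Paper
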